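/- arXiv:1809.10033 — 5 statements merged into one kernel-verified Lean document; each statement's English description precedes it below -/
import Mathlib

section
/- Let n ≥ 1 and let z ∈ ℂ with z ∉ {1−n, 2−n, …, n−2, n−1}. Then each element z + J_i (1 ≤ i ≤ n) is invertible in ℂ[S_n], the element Ω_{n,z} = ∑_{σ ∈ S_n} z^{#σ} σ is invertible in ℂ[S_n], and Ω_{n,z}^{−1} = (z + J_1)^{−1}(z + J_2)^{−1}⋯(z + J_n)^{−1}. -/
/-!
Common definitions: permutations of `Fin n` play the role of the symmetric
group `S_n` on `[n] = {1,…,n}` (0-indexed).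
-/

/-- The number of cycles of a permutation of `Fin n`, fixed points counted as cycles:
the number of fixed points plus the number of nontrivial cycles. -/
def cycleCount {n : ℕ} (σ : Equiv.Perm (Fin n)) : ℕ :=
  (n - σ.support.card) + Multiset.card σ.cycleType

/-- The top (largest moved point) of a permutation, as a natural number
(via `Fin.val`).  For a transposition `(a b)` with `a < b` this is `b`. -/
def top {n : ℕ} (τ : Equiv.Perm (Fin n)) : ℕ :=
  τ.support.sup Fin.val

/-- The ordered product `f 0 * f 1 * ⋯ * f (r-1)` of a tuple of permutations. -/
def tupleProd {n r : ℕ} (f : Fin r → Equiv.Perm (Fin n)) : Equiv.Perm (Fin n) :=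
  (List.ofFn f).prod

/-- A tuple all of whose entries are transpositions. -/
def IsTranspositionTuple {n r : ℕ} (f : Fin r → Equiv.Perm (Fin n)) : Prop :=
  ∀ i, (f i).IsSwap

/-- A weakly monotone tuple of transpositions: the tops are weakly increasing. -/
def WeaklyMonotoneTuple {n r : ℕ} (f : Fin r → Equiv.Perm (Fin n)) : Prop :=
  IsTranspositionTuple f ∧ ∀ i j : Fin r, i ≤ j → top (f i) ≤ top (f j)

/-- A strictly monotone tuple of transpositions: the tops are strictly increasing. -/
def StrictlyMonotoneTuple {n r : ℕ} (f : Fin r → Equiv.Perm (Fin n)) : Prop :=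
  IsTranspositionTuple f ∧ ∀ i j : Fin r, i < j → top (f i) < top (f j)

/-- The subgroup generated by a set of permutations acts transitively on `Fin n`. -/
def ActsTransitively {n : ℕ} (S : Set (Equiv.Perm (Fin n))) : Prop :=
  ∀ x y : Fin n, ∃ g ∈ Subgroup.closure S, g x = y

/-- The Jucys–Murphy element `J_i = ∑_{j<i} (j i)` in the group algebra `ℂ[S_n]`
(`J_1 = 0` for the smallest index). -/
noncomputable def JM (n : ℕ) (i : Fin n) : MonoidAlgebra ℂ (Equiv.Perm (Fin n)) :=
  ∑ j ∈ Finset.Iio i, MonoidAlgebra.of ℂ (Equiv.Perm (Fin n)) (Equiv.swap j i)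

/-- `Ω_{n,z} = ∑_{σ ∈ S_n} z^{#σ} σ` in the group algebra `ℂ[S_n]`. -/
noncomputable def Omega (n : ℕ) (z : ℂ) : MonoidAlgebra ℂ (Equiv.Perm (Fin n)) :=
  ∑ σ : Equiv.Perm (Fin n), z ^ cycleCount σ • MonoidAlgebra.of ℂ (Equiv.Perm (Fin n)) σ

/-- The cycle type of a permutation as a partition of `n`: the multiset of cycle
lengths, fixed points contributing parts equal to `1`. -/
def fullCycleType {n : ℕ} (σ : Equiv.Perm (Fin n)) : Multiset ℕ :=
  σ.cycleType + Multiset.replicate (n - σ.support.card) 1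

/-!
Every `σ ∈ S_n` factors uniquely as `σ = (j₁ 1)(j₂ 2)⋯(jₙ n)` with `j_k ≤ k` (reading `(k k)` as
the identity): multiplying a permutation of `{1, …, k-1}` on the right by `(j k)` with `j < k`
inserts `k` into the cycle of `j` and so adds no cycle, while the factor `z` for `j = k` adds the
fixed point `k`. Expanding the product therefore gives `(z + J₁)⋯(z + Jₙ) = Ω_{n,z}`; the factors
commute, so `Ω_{n,z}⁻¹` is the product of their inverses as soon as each `z + J_k` is invertible.

For the latter, the spectrum of `J_k` lies in `{1-k, …, k-1}`, by induction on `k` from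
`J_{k+1} = s J_k s + s`, `s = (k k+1)`. If `u` is a common eigenvector of the commuting `J_k` and
`J_{k+1}`, with eigenvalues `a` and `c`, then `J_k (s u) = c s u - u`; so either `u` and `s u` are
independent and `c` is also an eigenvalue of `J_k`, or `s u = ±u` and `c = a ± 1`.
-/

open Finset Equiv Equiv.Perm

namespace Equiv.Perm

variable {α : Type*} [DecidableEq α] [Fintype α]

theorem card_cycleType_add_card_support_of_isCycle {c : Perm α} (hc : c.IsCycle) {x : α}
    (hx : c x ≠ x) :
    Multiset.card (swap x (c x) * c).cycleType + #c.support =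
      #(swap x (c x) * c).support + 2 := by
  by_cases hcc : c (c x) = x
  · have hc2 : c = swap x (c x) := hc.eq_swap_of_apply_apply_eq_self hx hcc
    have h1 : swap x (c x) * c = 1 := by
      rw [mul_eq_one_iff_inv_eq, swap_inv]; exact hc2.symm
    rw [h1, hc2, card_support_swap (Ne.symm hx)]
    simp
  · have hx' : x ∈ c.support := mem_support.mpr hx
    rw [(hc.swap_mul hx hcc).cycleType, support_swap_mul_eq c x hcc,
      Finset.sdiff_singleton_eq_erase, card_erase_of_mem hx']
    have := card_pos.mpr ⟨x, hx'⟩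
    simp only [Multiset.card_singleton]
    omega

theorem card_cycleType_add_card_support_swap_mul {f : Perm α} {x : α} (hx : f x ≠ x) :
    Multiset.card f.cycleType + #(swap x (f x) * f).support + 1 =
      Multiset.card (swap x (f x) * f).cycleType + #f.support := by
  set c := f.cycleOf x
  set ρ := f * c⁻¹
  have hc : c.IsCycle := f.isCycle_cycleOf hx
  have hcx : c x = f x := f.cycleOf_apply_self x
  have hρc : ρ.Disjoint c := disjoint_mul_inv_of_mem_cycleFactorsFinset
    (cycleOf_mem_cycleFactorsFinset_iff.mpr (mem_support.mpr hx))
  have hf : f = ρ * c := by simp [ρ]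
  set d := swap x (c x) * c
  have hρd : ρ.Disjoint d := by
    rw [disjoint_iff_disjoint_support] at hρc ⊢
    exact hρc.mono_right fun y hy => (mem_support_swap_mul_imp_mem_support_ne hy).1
  -- `swap x (f x)` only moves points of the cycle `c`, so it commutes with `ρ`
  have hρx : ρ x = x := (hρc x).resolve_right (hcx ▸ hx)
  have hρfx : ρ (f x) = f x := (hρc (f x)).resolve_right (by
    rw [← hcx]; exact c.injective.ne (hcx ▸ hx))
  have hcomm : swap x (c x) * ρ = ρ * swap x (c x) := by
    rw [mul_swap_eq_swap_mul ρ, hρx, hcx, hρfx]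
  have hswap : swap x (f x) * f = ρ * d := by
    calc swap x (f x) * f = swap x (c x) * ρ * c := by rw [hcx, mul_assoc, ← hf]
      _ = ρ * d := by rw [hcomm, mul_assoc]
  rw [hswap, hf, hρc.cycleType_mul, hρd.cycleType_mul, hρc.card_support_mul,
    hρd.card_support_mul, hc.cycleType, Multiset.card_add, Multiset.card_add,
    Multiset.card_singleton]
  have hd : Multiset.card d.cycleType + #c.support = #d.support + 2 :=
    card_cycleType_add_card_support_of_isCycle hc (hcx ▸ hx)
  omega

theorem card_cycleType_mul_swap_add_card_support {σ : Perm α} {j x : α} (hx : σ x = x)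
    (hjx : j ≠ x) :
    Multiset.card (σ * swap j x).cycleType + #σ.support + 1 =
      Multiset.card σ.cycleType + #(σ * swap j x).support := by
  have hσ : swap x ((σ * swap j x) x) * (σ * swap j x) = σ := by
    rw [mul_apply, swap_apply_right, mul_swap_eq_swap_mul, hx, swap_comm, swap_mul_self_mul]
  have := card_cycleType_add_card_support_swap_mul
    (f := σ * swap j x) (x := x) (by simpa [hx] using σ.injective.ne hjx)
  rwa [hσ] at this

end Equiv.Perm

namespace Module.End

variable {K V : Type*} [Field K] [IsAlgClosed K] [AddCommGroup V] [Module K V]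
  [FiniteDimensional K V]

theorem exists_hasEigenvector_of_commute {X Y : End K V} (h : Commute X Y) {c : K}
    (hc : Y.HasEigenvalue c) : ∃ a u, Y.HasEigenvector c u ∧ X.HasEigenvector a u := by
  have hmaps : ∀ u ∈ Y.eigenspace c, X u ∈ Y.eigenspace c :=
    fun u hu => mapsTo_genEigenspace_of_comm h.symm c 1 hu
  have : Nontrivial (Y.eigenspace c) := Submodule.nontrivial_iff_ne_bot.mpr hc
  obtain ⟨a, ha⟩ := exists_eigenvalue (X.restrict hmaps)
  obtain ⟨v, hv⟩ := ha.exists_hasEigenvector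
  refine ⟨a, v, ⟨v.2, by simpa using hv.2⟩, ?_, by simpa using hv.2⟩
  exact eigenspace_restrict_le_eigenspace X hmaps a ⟨v, hv.1, rfl⟩

theorem hasEigenvalue_or_of_eq_mul_mul_add {X Y s : End K V} (hXY : Commute X Y)
    (hs : s * s = 1) (hY : Y = s * X * s + s) {c : K} (hc : Y.HasEigenvalue c) :
    X.HasEigenvalue c ∨ X.HasEigenvalue (c - 1) ∨ X.HasEigenvalue (c + 1) := by
  obtain ⟨a, u, hYu, hXu⟩ := exists_hasEigenvector_of_commute hXY hc
  have hXs : X * s = s * Y - 1 := by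
    rw [hY, mul_add, ← mul_assoc, ← mul_assoc, hs, one_mul, add_sub_cancel_right]
  have hXsu : X (s u) = c • s u - u := by
    rw [← mul_apply, hXs, LinearMap.sub_apply, mul_apply, hYu.apply_eq_smul, map_smul, one_apply]
  by_cases hac : a = c
  · exact Or.inl (hac ▸ hasEigenvalue_of_hasEigenvector hXu)
  obtain ⟨t, ht⟩ : ∃ t : K, t * (c - a) = 1 :=
    ⟨_, inv_mul_cancel₀ (sub_ne_zero.mpr (Ne.symm hac))⟩
  by_cases hw : s u - t • u = 0
  · -- `u` is an eigenvector of the involution `s`, and then `c - a = t = ±1`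
    have hsu : s u = t • u := sub_eq_zero.mp hw
    have htt : t * t = 1 := by
      refine smul_left_injective K hXu.2 ?_
      simp only
      rw [mul_smul, ← hsu, ← map_smul, ← hsu, ← mul_apply, hs, one_apply, one_smul]
    have hat : a = c - t := by linear_combination (c - a) * htt - t * ht
    have : (t - 1) * (t + 1) = 0 := by linear_combination htt
    rcases mul_eq_zero.mp this with h | h
    · refine Or.inr (Or.inl ?_)
      rw [show c - 1 = a by linear_combination -hat + h]
      exact hasEigenvalue_of_hasEigenvector hXu
    · refine Or.inr (Or.inr ?_)
      rw [show c + 1 = a by linear_combination -hat + h]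
      exact hasEigenvalue_of_hasEigenvector hXu
  · refine Or.inl (hasEigenvalue_of_hasEigenvector ⟨mem_eigenspace_iff.mpr ?_, hw⟩)
    rw [map_sub, hXsu, map_smul, hXu.apply_eq_smul, smul_sub, smul_smul, smul_smul,
      show t * a = c * t - 1 by linear_combination -ht, sub_smul, one_smul]
    abel

end Module.End

theorem Algebra.hasEigenvalue_lmul_iff {K A : Type*} [Field K] [Ring A] [Algebra K A]
    [FiniteDimensional K A] {a : A} {c : K} :
    (Algebra.lmul K A a).HasEigenvalue c ↔ c ∈ spectrum K a := by
  rw [Module.End.hasEigenvalue_iff_mem_spectrum, spectrum.mem_iff, spectrum.mem_iff,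
    ← AlgHom.commutes (Algebra.lmul K A) c, ← map_sub, Algebra.lmul_isUnit_iff]

theorem spectrum.mem_or_of_eq_mul_mul_add {K A : Type*} [Field K] [IsAlgClosed K] [Ring A]
    [Algebra K A] [FiniteDimensional K A] {X Y s : A} (hXY : Commute X Y) (hs : s * s = 1)
    (hY : Y = s * X * s + s) {c : K} (hc : c ∈ spectrum K Y) :
    c ∈ spectrum K X ∨ c - 1 ∈ spectrum K X ∨ c + 1 ∈ spectrum K X := by
  simp only [← Algebra.hasEigenvalue_lmul_iff] at hc ⊢
  set L := Algebra.lmul K A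
  exact Module.End.hasEigenvalue_or_of_eq_mul_mul_add (X := L X) (s := L s) (hXY.map L)
    (by rw [← map_mul, hs, map_one]) (by simp only [hY, map_add, map_mul]) hc

theorem Ring.inverse_list_prod_of_pairwise_commute {M₀ : Type*} [MonoidWithZero M₀]
    {l : List M₀} (hl : l.Pairwise Commute) :
    Ring.inverse l.prod = (l.map Ring.inverse).prod := by
  induction l with
  | nil => simp
  | cons a l ih =>
    rw [List.pairwise_cons] at hl
    have hcomm : Commute a l.prod := Commute.list_prod_right _ _ hl.1
    rw [List.prod_cons, mul_inverse_rev' hcomm, ← hcomm.ringInverse_ringInverse.eq, ih hl.2,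
      List.map_cons, List.prod_cons]

section SymmetricGroupAlgebra

variable {n : ℕ}

local notation "of" => MonoidAlgebra.of ℂ (Perm (Fin n))

def permsBelow (n k : ℕ) : Finset (Perm (Fin n)) := {σ | ∀ x : Fin n, k ≤ x → σ x = x}

/-- For `σ ∈ permsBelow n k`, the number of cycles of `σ` as a permutation of `{0, …, k-1}`. -/
def cycleCountBelow (k : ℕ) (σ : Perm (Fin n)) : ℕ :=
  (k - #σ.support) + Multiset.card σ.cycleType

/-- `Ω_{k,z}`, seen in `ℂ[S_n]` through `S_k ⊆ S_n`. -/
noncomputable def OmegaBelow (n k : ℕ) (z : ℂ) : MonoidAlgebra ℂ (Perm (Fin n)) :=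
  ∑ σ ∈ permsBelow n k, z ^ cycleCountBelow k σ • MonoidAlgebra.of ℂ (Perm (Fin n)) σ

theorem mem_permsBelow {k : ℕ} {σ : Perm (Fin n)} :
    σ ∈ permsBelow n k ↔ ∀ x : Fin n, k ≤ x → σ x = x := by
  simp [permsBelow]

theorem card_support_le_of_mem_permsBelow {k : ℕ} {σ : Perm (Fin n)} (hσ : σ ∈ permsBelow n k) :
    #σ.support ≤ k := by
  refine (card_le_card_of_injOn Fin.val (t := range k) (fun x hx => ?_)
    Fin.val_injective.injOn).trans_eq (card_range k)
  by_contra h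
  exact mem_support.mp hx (mem_permsBelow.mp hσ x (by simpa using h))

theorem permsBelow_zero : permsBelow n 0 = {1} := by
  ext σ
  simp only [mem_permsBelow, zero_le, true_implies, mem_singleton, Perm.ext_iff, one_apply]

theorem permsBelow_self : permsBelow n n = univ := by
  ext σ
  simp only [mem_permsBelow, mem_univ, iff_true]
  exact fun x hx => absurd x.isLt hx.not_gt

theorem filter_apply_eq_self_permsBelow_succ (x : Fin n) :
    {π ∈ permsBelow n (x + 1) | π x = x} = permsBelow n x := by
  ext σ
  simp only [mem_filter, mem_permsBelow]
  refine ⟨fun ⟨hσ, hx⟩ y hy => ?_, fun hσ => ⟨fun y hy => hσ y (by omega), hσ x le_rfl⟩⟩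
  rcases hy.lt_or_eq with hy | hy
  · exact hσ y hy
  · rwa [Fin.ext hy.symm]

theorem mul_swap_mem_permsBelow_succ {x j : Fin n} {σ : Perm (Fin n)}
    (hσ : σ ∈ permsBelow n x) (hj : j < x) :
    σ * swap j x ∈ permsBelow n (x + 1) := by
  rw [mem_permsBelow] at hσ ⊢
  intro y hy
  have hyx : x < y := by rw [Fin.lt_def]; omega
  rw [mul_apply, swap_apply_of_ne_of_ne (hj.trans hyx).ne' hyx.ne', hσ y hyx.le]

theorem mul_swap_apply_ne {x j : Fin n} {σ : Perm (Fin n)} (hσ : σ ∈ permsBelow n x)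
    (hj : j < x) : (σ * swap j x) x ≠ x := by
  rw [mul_apply, swap_apply_right]
  exact fun h => hj.ne (σ.injective (h.trans (mem_permsBelow.mp hσ x le_rfl).symm))

theorem inv_apply_lt_of_mem_permsBelow_succ {x : Fin n} {π : Perm (Fin n)}
    (hπ : π ∈ permsBelow n (x + 1)) (hx : π x ≠ x) : π⁻¹ x < x := by
  have hπx : π (π⁻¹ x) = x := by simp
  by_contra! h
  rcases h.lt_or_eq with h | h
  · exact h.ne ((mem_permsBelow.mp hπ _ (Fin.lt_def.mp h)).symm.trans hπx).symm
  · exact hx (by nth_rewrite 1 [h]; exact hπx)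

theorem mul_swap_inv_apply_mem_permsBelow {x : Fin n} {π : Perm (Fin n)}
    (hπ : π ∈ permsBelow n (x + 1)) : π * swap (π⁻¹ x) x ∈ permsBelow n x := by
  have hπx : π (π⁻¹ x) = x := by simp
  rw [mem_permsBelow] at hπ ⊢
  intro y hy
  rcases (Fin.le_def.mpr hy).lt_or_eq with hy | rfl
  · have hπy := hπ y (Fin.lt_def.mp hy)
    have hyx : y ≠ π⁻¹ x := fun h => hy.ne' (by rw [← hπy, h, hπx])
    rw [mul_apply, swap_apply_of_ne_of_ne hyx hy.ne', hπy]
  · rw [mul_apply, swap_apply_right, hπx]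

theorem cycleCountBelow_succ {k : ℕ} {σ : Perm (Fin n)} (hσ : σ ∈ permsBelow n k) :
    cycleCountBelow (k + 1) σ = cycleCountBelow k σ + 1 := by
  have := card_support_le_of_mem_permsBelow hσ
  unfold cycleCountBelow
  omega

theorem cycleCountBelow_succ_mul_swap {x j : Fin n} {σ : Perm (Fin n)}
    (hσ : σ ∈ permsBelow n x) (hj : j < x) :
    cycleCountBelow (x + 1) (σ * swap j x) = cycleCountBelow x σ := by
  have h₁ := card_support_le_of_mem_permsBelow hσ
  have h₂ := card_support_le_of_mem_permsBelow (mul_swap_mem_permsBelow_succ hσ hj)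
  have h₃ := card_cycleType_mul_swap_add_card_support (mem_permsBelow.mp hσ x le_rfl) hj.ne
  unfold cycleCountBelow
  omega

theorem OmegaBelow_mul_algebraMap (x : Fin n) (z : ℂ) :
    OmegaBelow n x z * algebraMap ℂ _ z =
      ∑ σ ∈ permsBelow n x, z ^ cycleCountBelow (x + 1) σ • of σ := by
  rw [OmegaBelow, Finset.sum_mul]
  refine Finset.sum_congr rfl fun σ hσ => ?_
  rw [← Algebra.commutes, ← Algebra.smul_def, smul_smul, ← pow_succ', cycleCountBelow_succ hσ]

theorem OmegaBelow_mul_JM (x : Fin n) (z : ℂ) :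
    OmegaBelow n x z * JM n x =
      ∑ π ∈ permsBelow n (x + 1) with π x ≠ x, z ^ cycleCountBelow (x + 1) π • of π := by
  rw [OmegaBelow, JM, Finset.sum_mul]
  simp only [Finset.mul_sum, smul_mul_assoc, ← map_mul]
  rw [← Finset.sum_product']
  refine Finset.sum_nbij' (fun p => p.1 * swap p.2 x) (fun π => (π * swap (π⁻¹ x) x, π⁻¹ x))
    ?_ ?_ ?_ ?_ ?_
  · rintro ⟨σ, j⟩ hp
    simp only [mem_product, Finset.mem_Iio] at hp
    simp only [mem_filter]
    exact ⟨mul_swap_mem_permsBelow_succ hp.1 hp.2, mul_swap_apply_ne hp.1 hp.2⟩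
  · intro π hπ
    simp only [mem_filter] at hπ
    simp only [mem_product, Finset.mem_Iio]
    exact ⟨mul_swap_inv_apply_mem_permsBelow hπ.1, inv_apply_lt_of_mem_permsBelow_succ hπ.1 hπ.2⟩
  · rintro ⟨σ, j⟩ hp
    simp only [mem_product] at hp
    have hj : (σ * swap j x)⁻¹ x = j := by
      rw [inv_eq_iff_eq, mul_apply, swap_apply_left, mem_permsBelow.mp hp.1 x le_rfl]
    rw [hj, mul_assoc, swap_mul_self, mul_one]
  · intro π _
    simp only [mul_assoc, swap_mul_self, mul_one]
  · rintro ⟨σ, j⟩ hp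
    simp only [mem_product, Finset.mem_Iio] at hp
    rw [cycleCountBelow_succ_mul_swap hp.1 hp.2]

theorem OmegaBelow_mul_algebraMap_add_JM (x : Fin n) (z : ℂ) :
    OmegaBelow n x z * (algebraMap ℂ _ z + JM n x) = OmegaBelow n (x + 1) z := by
  rw [mul_add, OmegaBelow_mul_algebraMap, OmegaBelow_mul_JM, OmegaBelow,
    ← sum_filter_add_sum_filter_not (permsBelow n (x + 1)) (fun π => π x = x),
    filter_apply_eq_self_permsBelow_succ]

theorem prod_take_ofFn_algebraMap_add_JM (z : ℂ) {k : ℕ} (hk : k ≤ n) :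
    ((List.ofFn fun i => algebraMap ℂ (MonoidAlgebra ℂ (Perm (Fin n))) z + JM n i).take k).prod =
      OmegaBelow n k z := by
  induction k with
  | zero => simp [OmegaBelow, permsBelow_zero, cycleCountBelow, MonoidAlgebra.one_def]
  | succ k ih =>
    rw [List.prod_take_succ _ _ (by simpa using hk), ih (by omega), List.getElem_ofFn]
    exact OmegaBelow_mul_algebraMap_add_JM ⟨k, hk⟩ z

theorem prod_ofFn_algebraMap_add_JM (z : ℂ) :
    (List.ofFn fun i => algebraMap ℂ (MonoidAlgebra ℂ (Perm (Fin n))) z + JM n i).prod =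
      Omega n z := by
  rw [← List.take_length (l := List.ofFn _), List.length_ofFn,
    prod_take_ofFn_algebraMap_add_JM z le_rfl, OmegaBelow, permsBelow_self]
  rfl

theorem of_swap_mul_self (a b : Fin n) : of (swap a b) * of (swap a b) = 1 := by
  rw [← map_mul, swap_mul_self, map_one]

theorem commute_of_JM {σ : Perm (Fin n)} {j : Fin n} (hσ : ∀ b, j ≤ b → σ b = b) :
    Commute (of σ) (JM n j) := by
  have hlt : ∀ b, b < j ↔ σ b < j := fun b => by
    refine ⟨fun hb => ?_, fun hb => ?_⟩ <;> by_contra! h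
    · exact hb.not_ge (σ.injective (hσ _ h) ▸ h)
    · exact h.not_gt (hσ b h ▸ hb)
  simp only [Commute, SemiconjBy, JM, Finset.mul_sum, Finset.sum_mul]
  refine Finset.sum_equiv σ (by simpa using hlt) fun b _ => ?_
  rw [← map_mul, ← map_mul, mul_swap_eq_swap_mul, hσ j le_rfl]

theorem JM_commute (i j : Fin n) : Commute (JM n i) (JM n j) := by
  wlog hij : i < j generalizing i j
  · rcases (not_lt.mp hij).lt_or_eq with h | rfl
    · exact (this j i h).symm
    · exact Commute.refl _
  refine Commute.sum_left _ _ _ fun a ha => commute_of_JM fun b hb => ?_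
  have ha : a < i := Finset.mem_Iio.mp ha
  exact swap_apply_of_ne_of_ne (ha.trans (hij.trans_le hb)).ne' (hij.trans_le hb).ne'

theorem JM_eq_of_swap_mul_JM_mul_of_swap_add {i j : Fin n} (hij : (i : ℕ) + 1 = j) :
    JM n j = of (swap i j) * JM n i * of (swap i j) + of (swap i j) := by
  have hIio : Iio j = insert i (Iio i) := by
    ext b
    simp only [Finset.mem_Iio, Finset.mem_insert, Fin.lt_def, Fin.ext_iff]
    omega
  rw [JM, JM, hIio, sum_insert (by simp), add_comm, Finset.mul_sum, Finset.sum_mul]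
  congr 1
  refine Finset.sum_congr rfl fun b hb => ?_
  have hb : b < i := Finset.mem_Iio.mp hb
  have hij' : i < j := by rw [Fin.lt_def]; omega
  rw [← map_mul, ← map_mul, swap_mul_swap_mul_swap hb.ne (hb.trans hij').ne, swap_comm]

theorem exists_int_eq_of_mem_spectrum_JM (i : Fin n) {c : ℂ} (hc : c ∈ spectrum ℂ (JM n i)) :
    ∃ m : ℤ, c = m ∧ |m| ≤ (i : ℕ) := by
  induction hi : (i : ℕ) generalizing i c with
  | zero =>
    have hJM : JM n i = 0 :=
      Finset.sum_eq_zero fun b hb => absurd (Fin.lt_def.mp (Finset.mem_Iio.mp hb)) (by omega)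
    rw [hJM, spectrum.zero_eq, Set.mem_singleton_iff] at hc
    exact ⟨0, by simp [hc], by simp⟩
  | succ k ih =>
    set i' : Fin n := ⟨k, by omega⟩
    rcases spectrum.mem_or_of_eq_mul_mul_add (JM_commute i' i) (of_swap_mul_self i' i)
      (JM_eq_of_swap_mul_JM_mul_of_swap_add (by simp [i', hi])) hc with h | h | h
    · obtain ⟨m, rfl, hm⟩ := ih i' h rfl
      exact ⟨m, rfl, by omega⟩
    · obtain ⟨m, hm, hmk⟩ := ih i' h rfl
      refine ⟨m + 1, by push_cast; linear_combination hm, ?_⟩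
      rw [abs_le] at hmk ⊢
      omega
    · obtain ⟨m, hm, hmk⟩ := ih i' h rfl
      refine ⟨m - 1, by push_cast; linear_combination hm, ?_⟩
      rw [abs_le] at hmk ⊢
      omega

theorem isUnit_algebraMap_add_JM {z : ℂ} (i : Fin n) (hz : ∀ m : ℤ, |m| ≤ (i : ℕ) → z ≠ m) :
    IsUnit (algebraMap ℂ (MonoidAlgebra ℂ (Perm (Fin n))) z + JM n i) := by
  have : -z ∉ spectrum ℂ (JM n i) := fun h => by
    obtain ⟨m, hm, hmi⟩ := exists_int_eq_of_mem_spectrum_JM i h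
    exact hz (-m) (by rwa [abs_neg]) (by push_cast; linear_combination -hm)
  rwa [spectrum.notMem_iff, map_neg, ← neg_add', IsUnit.neg_iff] at this

end SymmetricGroupAlgebra

theorem omega_inverse_eq_product_of_JM_inverses_general (n : ℕ) (z : ℂ)
    (hz : ∀ k : ℤ, 1 - (n : ℤ) ≤ k → k ≤ (n : ℤ) - 1 → z ≠ (k : ℂ)) :
    (∀ i : Fin n,
      IsUnit (algebraMap ℂ (MonoidAlgebra ℂ (Equiv.Perm (Fin n))) z + JM n i)) ∧
    IsUnit (Omega n z) ∧
    Ring.inverse (Omega n z) =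
      (List.ofFn (fun i : Fin n =>
        Ring.inverse (algebraMap ℂ (MonoidAlgebra ℂ (Equiv.Perm (Fin n))) z + JM n i))).prod := by
  have hunit (i : Fin n) :
      IsUnit (algebraMap ℂ (MonoidAlgebra ℂ (Perm (Fin n))) z + JM n i) :=
    isUnit_algebraMap_add_JM i fun m hm => by
      have := abs_le.mp hm
      exact hz m (by omega) (by omega)
  have hcomm : (List.ofFn fun i =>
      algebraMap ℂ (MonoidAlgebra ℂ (Perm (Fin n))) z + JM n i).Pairwise Commute :=
    List.pairwise_ofFn.mpr fun i j _ => (Algebra.commute_algebraMap_left z _).add_left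
      ((Algebra.commute_algebraMap_right z _).add_right (JM_commute i j))
  rw [← prod_ofFn_algebraMap_add_JM z]
  refine ⟨hunit, List.prod_isUnit (List.forall_mem_ofFn_iff.mpr hunit), ?_⟩
  rw [Ring.inverse_list_prod_of_pairwise_commute hcomm, List.map_ofFn]
  rfl

/-- For `n ≥ 1` and `z ∈ ℂ` avoiding `{1-n, …, n-1}`, each `z + J_i`
is invertible in `ℂ[S_n]`, `Ω_{n,z}` is invertible, and
`Ω_{n,z}⁻¹ = (z + J_1)⁻¹(z + J_2)⁻¹ ⋯ (z + J_n)⁻¹`. -/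
theorem omega_inverse_eq_product_of_JM_inverses (n : ℕ) (hn : 1 ≤ n) (z : ℂ)
    (hz : ∀ k : ℤ, 1 - (n : ℤ) ≤ k → k ≤ (n : ℤ) - 1 → z ≠ (k : ℂ)) :
    (∀ i : Fin n,
      IsUnit (algebraMap ℂ (MonoidAlgebra ℂ (Equiv.Perm (Fin n))) z + JM n i)) ∧
    IsUnit (Omega n z) ∧
    Ring.inverse (Omega n z) =
      (List.ofFn (fun i : Fin n =>
        Ring.inverse (algebraMap ℂ (MonoidAlgebra ℂ (Equiv.Perm (Fin n))) z + JM n i))).prod :=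
  omega_inverse_eq_product_of_JM_inverses_general n z hz
end

section
/- Let n ≥ 1 and r ≥ 0. In ℂ[S_n], the r-th complete homogeneous symmetric polynomial of the Jucys–Murphy elements equals the sum of products of all weakly monotone r-tuples of transpositions: ∑_{1 ≤ i_1 ≤ i_2 ≤ ⋯ ≤ i_r ≤ n} J_{i_1} J_{i_2} ⋯ J_{i_r} = ∑ τ_1 τ_2 ⋯ τ_r, where the right-hand sum runs over all tuples (τ_1,…,τ_r) of transpositions of [n] that are weakly monotone. -/
/-!
Since `J_i` is the sum of the transpositions with top `i`, expanding the product
`J_{i_1} ⋯ J_{i_r}` gives the sum of the products of all transposition tuples whose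
sequence of tops is `(i_1, …, i_r)`. A tuple of transpositions is weakly monotone exactly
when its sequence of tops is, so summing over monotone `(i_1, …, i_r)` collects every
weakly monotone tuple exactly once.
-/

open Finset Fintype Equiv

theorem List.prod_ofFn_sum_eq_sum_piFinset {R β : Type*} [Semiring R] :
    ∀ {r : ℕ} (S : Fin r → Finset β) (a : Fin r → β → R),
      (List.ofFn fun k => ∑ x ∈ S k, a k x).prod =
        ∑ f ∈ piFinset S, (List.ofFn fun k => a k (f k)).prod
  | 0, S, a => by simp [piFinset_of_isEmpty]
  | r + 1, S, a => by
    have hS : piFinset S = (S 0 ×ˢ piFinset (Fin.tail S)).map (Fin.consEquiv _).toEmbedding := by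
      simpa using filter_piFinset_eq_map_consEquiv S (fun _ => True)
    rw [List.ofFn_succ, List.prod_cons, List.prod_ofFn_sum_eq_sum_piFinset, Finset.sum_mul_sum,
      hS, sum_map, sum_product]
    simp only [Fin.consEquiv, Function.Embedding.coeFn_mk, coe_fn_mk, List.ofFn_succ,
      Fin.cons_zero, Fin.cons_succ, List.prod_cons]
    rfl

lemma top_swap {n : ℕ} {a b : Fin n} (h : a ≠ b) : top (swap a b) = max a.val b.val := by
  simp [top, Perm.support_swap h]

lemma Equiv.Perm.IsSwap.exists_top_eq {n : ℕ} {τ : Perm (Fin n)} (hτ : τ.IsSwap) :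
    ∃ i : Fin n, top τ = i := by
  obtain ⟨a, b, hab, rfl⟩ := hτ
  exact ⟨max a b, by simp [top_swap hab]⟩

def swapsWithTop {n : ℕ} (i : Fin n) : Finset (Perm (Fin n)) :=
  (Iio i).image (swap · i)

lemma mem_swapsWithTop {n : ℕ} {i : Fin n} {τ : Perm (Fin n)} :
    τ ∈ swapsWithTop i ↔ τ.IsSwap ∧ top τ = i := by
  constructor
  · simp only [swapsWithTop, mem_image, mem_Iio]
    rintro ⟨j, hj, rfl⟩
    exact ⟨⟨j, i, hj.ne, rfl⟩, by simp [top_swap hj.ne, Fin.lt_def.mp hj |>.le]⟩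
  · rintro ⟨⟨a, b, hab, rfl⟩, htop⟩
    rw [top_swap hab] at htop
    simp only [swapsWithTop, mem_image, mem_Iio]
    rcases hab.lt_or_gt with h | h
    · obtain rfl : b = i := Fin.ext (by rw [Fin.lt_def] at h; omega)
      exact ⟨a, h, rfl⟩
    · obtain rfl : a = i := Fin.ext (by rw [Fin.lt_def] at h; omega)
      exact ⟨b, h, swap_comm _ _⟩

lemma JM_eq_sum_swapsWithTop {n : ℕ} (i : Fin n) :
    JM n i = ∑ τ ∈ swapsWithTop i, MonoidAlgebra.of ℂ (Perm (Fin n)) τ := by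
  rw [swapsWithTop, sum_image]
  · rfl
  · intro j _ j' _ h
    simpa using congrArg (· i) h

lemma mem_piFinset_swapsWithTop {n r : ℕ} {g : Fin r → Fin n} {f : Fin r → Perm (Fin n)} :
    f ∈ piFinset (fun k => swapsWithTop (g k)) ↔
      IsTranspositionTuple f ∧ ∀ k, top (f k) = g k := by
  simp only [mem_piFinset, mem_swapsWithTop, IsTranspositionTuple, forall_and]

lemma prod_JM_eq_sum_piFinset_swapsWithTop {n r : ℕ} (g : Fin r → Fin n) :
    (List.ofFn fun k => JM n (g k)).prod =
      ∑ f ∈ piFinset (fun k => swapsWithTop (g k)),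
        MonoidAlgebra.of ℂ (Perm (Fin n)) (tupleProd f) := by
  simp only [JM_eq_sum_swapsWithTop, List.prod_ofFn_sum_eq_sum_piFinset, tupleProd]
  refine sum_congr rfl fun f _ => ?_
  rw [map_list_prod, List.map_ofFn]
  rfl

open scoped Classical in
lemma filter_weaklyMonotoneTuple_eq_biUnion (n r : ℕ) :
    univ.filter (fun f : Fin r → Perm (Fin n) => WeaklyMonotoneTuple f) =
      (univ.filter fun g : Fin r → Fin n => Monotone g).biUnion
        fun g => piFinset fun k => swapsWithTop (g k) := by
  ext f
  rw [mem_filter, mem_biUnion]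
  simp only [mem_filter, mem_univ, true_and, mem_piFinset_swapsWithTop, WeaklyMonotoneTuple]
  constructor
  · rintro ⟨hswap, hmono⟩
    choose g hg using fun k => (hswap k).exists_top_eq
    refine ⟨g, fun i j hij => ?_, hswap, hg⟩
    simpa [Fin.le_def, ← hg] using hmono i j hij
  · rintro ⟨g, hg, hswap, htop⟩
    exact ⟨hswap, fun i j hij => by simpa [htop] using hg hij⟩

lemma pairwiseDisjoint_piFinset_swapsWithTop (n r : ℕ) (s : Set (Fin r → Fin n)) :
    s.PairwiseDisjoint fun g => piFinset fun k => swapsWithTop (g k) := by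
  intro g _ g' _ hne
  refine disjoint_left.mpr fun f hf hf' => hne (funext fun k => Fin.ext ?_)
  rw [← (mem_piFinset_swapsWithTop.mp hf).2 k, (mem_piFinset_swapsWithTop.mp hf').2 k]

open scoped Classical in
theorem complete_homogeneous_JM_eq_weakly_monotone_sum_general (n r : ℕ) :
    ∑ g ∈ Finset.univ.filter (fun g : Fin r → Fin n => Monotone g),
        (List.ofFn (fun k : Fin r => JM n (g k))).prod =
    ∑ f ∈ Finset.univ.filter
        (fun f : Fin r → Equiv.Perm (Fin n) => WeaklyMonotoneTuple f),
        MonoidAlgebra.of ℂ (Equiv.Perm (Fin n)) (tupleProd f) := by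
  rw [filter_weaklyMonotoneTuple_eq_biUnion,
    sum_biUnion (pairwiseDisjoint_piFinset_swapsWithTop n r _)]
  exact sum_congr rfl fun g _ => prod_JM_eq_sum_piFinset_swapsWithTop g

open scoped Classical in
/-- For `n ≥ 1` and `r ≥ 0`, the `r`-th complete homogeneous symmetric
polynomial in the Jucys–Murphy elements, `∑_{i_1≤⋯≤i_r} J_{i_1}⋯J_{i_r}`, equals the
sum over all weakly monotone `r`-tuples of transpositions of their products. -/
theorem complete_homogeneous_JM_eq_weakly_monotone_sum (n r : ℕ) (hn : 1 ≤ n) :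
    ∑ g ∈ Finset.univ.filter (fun g : Fin r → Fin n => Monotone g),
        (List.ofFn (fun k : Fin r => JM n (g k))).prod =
    ∑ f ∈ Finset.univ.filter
        (fun f : Fin r → Equiv.Perm (Fin n) => WeaklyMonotoneTuple f),
        MonoidAlgebra.of ℂ (Equiv.Perm (Fin n)) (tupleProd f) :=
  complete_homogeneous_JM_eq_weakly_monotone_sum_general n r
end

section
/- Let n ≥ 1, let σ ∈ S_n, and let (τ_1,…,τ_r) be the unique strictly monotone tuple of transpositions with τ_1 τ_2 ⋯ τ_r = σ. Then for every α ∈ S_n, the subgroup of S_n generated by α and σ acts transitively on [n] if and only if the subgroup generated by α, τ_1, …, τ_r acts transitively on [n]. -/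
/-!
For a subgroup `H`, the elements that map every point into its own `H`-orbit form a subgroup
containing `H`. If `σ = τ₁ ⋯ τᵣ` is strictly monotone, the top `p` of `τᵣ` is fixed by
`τ₁ ⋯ τᵣ₋₁`, so `τᵣ = (q p)` with `σ q = p`. Hence `τᵣ`, and with it `τ₁ ⋯ τᵣ₋₁ = σ τᵣ`, preserve
every cycle of `σ`, and by induction so does every `τᵢ`. Therefore `⟨α, τ₁, …, τᵣ⟩` contains
`⟨α, σ⟩` and preserves its orbits, so the two groups have the same orbits.
-/

namespace Subgroup

variable {G : Type*} [Group G] (H : Subgroup G) (α : Type*) [MulAction G α]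

def orbitPreserving : Subgroup G where
  carrier := {g | ∀ x : α, g • x ∈ MulAction.orbit H x}
  one_mem' x := by simp only [one_smul]; exact MulAction.mem_orbit_self x
  mul_mem' {g₁ g₂} hg₁ hg₂ x := by
    rw [mul_smul, ← MulAction.orbit_eq_iff.mpr (hg₂ x)]
    exact hg₁ (g₂ • x)
  inv_mem' {g} hg x := by
    have := hg (g⁻¹ • x)
    rw [smul_inv_smul] at this
    exact MulAction.mem_orbit_symm.mp this

variable {H α}

theorem le_orbitPreserving : H ≤ H.orbitPreserving α :=
  fun h hh _ => ⟨⟨h, hh⟩, rfl⟩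

theorem orbitPreserving_le_orbitPreserving {K : Subgroup G} (hK : K ≤ H.orbitPreserving α) :
    K.orbitPreserving α ≤ H.orbitPreserving α := by
  intro g hg x
  obtain ⟨k, hk⟩ := hg x
  rw [← hk]
  exact hK k.2 x

end Subgroup

open Equiv Subgroup

theorem Equiv.swap_mem_orbitPreserving {β : Type*} [DecidableEq β] {H : Subgroup (Perm β)}
    {x y : β} (hxy : y ∈ MulAction.orbit H x) : swap x y ∈ H.orbitPreserving β := by
  intro z
  simp only [Perm.smul_def]
  rcases eq_or_ne z x with rfl | hzx
  · simpa using hxy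
  rcases eq_or_ne z y with rfl | hzy
  · simpa using MulAction.mem_orbit_symm.mp hxy
  · rw [swap_apply_of_ne_of_ne hzx hzy]
    exact MulAction.mem_orbit_self z

section Fin

variable {n r : ℕ}

theorem tupleProd_mem_closure (f : Fin r → Perm (Fin n)) :
    tupleProd f ∈ closure (Set.range f) :=
  list_prod_mem fun _ hg => by
    obtain ⟨i, rfl⟩ := List.mem_ofFn.mp hg
    exact subset_closure ⟨i, rfl⟩

theorem tupleProd_succ (f : Fin (r + 1) → Perm (Fin n)) :
    tupleProd f = tupleProd (Fin.init f) * f (Fin.last r) := by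
  rw [tupleProd, List.ofFn_succ', List.concat_eq_append, List.prod_append, List.prod_singleton]
  rfl

theorem apply_eq_self_of_top_lt {τ : Perm (Fin n)} {p : Fin n} (h : top τ < p) : τ p = p := by
  by_contra hp
  exact (Finset.le_sup (f := Fin.val) (Perm.mem_support.mpr hp)).not_gt h

theorem tupleProd_apply_eq_self_of_top_lt {f : Fin r → Perm (Fin n)} {p : Fin n}
    (h : ∀ i, top (f i) < p) : tupleProd f p = p := by
  have : closure (Set.range f) ≤ MulAction.stabilizer (Perm (Fin n)) p := by
    rw [closure_le]
    rintro _ ⟨i, rfl⟩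
    exact apply_eq_self_of_top_lt (h i)
  exact this (tupleProd_mem_closure f)

theorem Equiv.Perm.IsSwap.exists_eq_swap_top {τ : Perm (Fin n)} (h : τ.IsSwap) :
    ∃ q p : Fin n, τ = swap q p ∧ top τ = p := by
  obtain ⟨a, b, hab, rfl⟩ := h
  have htop : top (swap a b) = max (a : ℕ) b := by
    simp [top, Perm.support_swap hab]
  rcases le_total a b with hle | hle
  · exact ⟨a, b, rfl, by rw [htop]; exact max_eq_right hle⟩
  · exact ⟨b, a, swap_comm a b, by rw [htop]; exact max_eq_left hle⟩

theorem StrictlyMonotoneTuple.init {f : Fin (r + 1) → Perm (Fin n)}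
    (hf : StrictlyMonotoneTuple f) : StrictlyMonotoneTuple (Fin.init f) :=
  ⟨fun i => hf.1 i.castSucc, fun _ _ hij => hf.2 _ _ (Fin.castSucc_lt_castSucc_iff.mpr hij)⟩

theorem StrictlyMonotoneTuple.mem_orbitPreserving {f : Fin r → Perm (Fin n)}
    (hf : StrictlyMonotoneTuple f) (i : Fin r) :
    f i ∈ (zpowers (tupleProd f)).orbitPreserving (Fin n) := by
  induction r with
  | zero => exact i.elim0
  | succ r ih =>
    set σ := tupleProd f
    obtain ⟨q, p, hτ, htop⟩ := (hf.1 (Fin.last r)).exists_eq_swap_top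
    have hσ : σ = tupleProd (Fin.init f) * f (Fin.last r) := tupleProd_succ f
    have hfix : tupleProd (Fin.init f) p = p :=
      tupleProd_apply_eq_self_of_top_lt fun j => htop ▸ hf.2 _ _ (Fin.castSucc_lt_last j)
    have hlast : f (Fin.last r) ∈ (zpowers σ).orbitPreserving (Fin n) := by
      rw [hτ]
      refine swap_mem_orbitPreserving ⟨⟨σ, mem_zpowers σ⟩, ?_⟩
      simp [MulAction.subgroup_smul_def, hσ, hτ, hfix]
    have hinit : zpowers (tupleProd (Fin.init f)) ≤ (zpowers σ).orbitPreserving (Fin n) := by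
      rw [zpowers_le, eq_mul_inv_of_mul_eq hσ.symm]
      exact mul_mem (le_orbitPreserving (mem_zpowers σ)) (inv_mem hlast)
    exact Fin.lastCases hlast (fun j => orbitPreserving_le_orbitPreserving hinit (ih hf.init j)) i

end Fin

theorem ActsTransitively.of_closure_le_orbitPreserving {n : ℕ} {S T : Set (Perm (Fin n))}
    (hT : ActsTransitively T) (hle : closure T ≤ (closure S).orbitPreserving (Fin n)) :
    ActsTransitively S := by
  intro x y
  obtain ⟨g, hg, rfl⟩ := hT x y
  obtain ⟨⟨h, hh⟩, hhx⟩ := hle hg x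
  exact ⟨h, hh, hhx⟩

theorem transitive_closure_iff_of_strictly_monotone_factorization_general (n : ℕ)
    (σ : Equiv.Perm (Fin n)) (r : ℕ) (f : Fin r → Equiv.Perm (Fin n))
    (hf : StrictlyMonotoneTuple f) (hprod : tupleProd f = σ)
    (α : Equiv.Perm (Fin n)) :
    ActsTransitively {α, σ} ↔ ActsTransitively ({α} ∪ Set.range f) := by
  subst hprod
  constructor
  · intro h
    refine h.of_closure_le_orbitPreserving (le_trans ?_ le_orbitPreserving)
    rw [closure_le]
    rintro _ (rfl | rfl)
    · exact subset_closure (Or.inl rfl)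
    · exact closure_mono Set.subset_union_right (tupleProd_mem_closure f)
  · intro h
    refine h.of_closure_le_orbitPreserving ?_
    rw [closure_le]
    rintro _ (rfl | ⟨i, rfl⟩)
    · exact le_orbitPreserving (subset_closure (Or.inl rfl))
    · have hσ : zpowers (tupleProd f) ≤ closure {α, tupleProd f} :=
        zpowers_le.mpr (subset_closure (Or.inr rfl))
      exact orbitPreserving_le_orbitPreserving (hσ.trans le_orbitPreserving)
        (hf.mem_orbitPreserving i)

/-- If `(τ_1,…,τ_r)` is the (unique) strictly monotone factorization
of `σ` into transpositions, then for every `α`, the subgroup generated by `α` and `σ`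
acts transitively on `[n]` iff the subgroup generated by `α, τ_1, …, τ_r` does. -/
theorem transitive_closure_iff_of_strictly_monotone_factorization (n : ℕ) (hn : 1 ≤ n)
    (σ : Equiv.Perm (Fin n)) (r : ℕ) (f : Fin r → Equiv.Perm (Fin n))
    (hf : StrictlyMonotoneTuple f) (hprod : tupleProd f = σ)
    (α : Equiv.Perm (Fin n)) :
    ActsTransitively {α, σ} ↔ ActsTransitively ({α} ∪ Set.range f) :=
  transitive_closure_iff_of_strictly_monotone_factorization_general n σ r f hf hprod α
end

section
/- Let π be a set partition of [n] and r ≥ 0. Call a transposition of [n] π-internal if both of its moved points lie in the same block of π, and let W^↑_r(π) be the set of weakly monotone r-tuples of π-internal transpositions. For w ∈ W^↑_r(π) and a block B of π, let w|_B denote the subtuple of entries of w that move points of B. Then the map w ↦ (w|_B)_{B ∈ π} is a bijection from W^↑_r(π) onto the disjoint union, over all families (r_B)_{B ∈ π} of nonnegative integers with ∑_{B ∈ π} r_B = r, of the products ∏_{B ∈ π} W^↑_{r_B}(B), where W^↑_{r_B}(B) is the set of weakly monotone r_B-tuples of transpositions whose moved points both lie in B. -/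
/-- A weakly monotone list of transpositions: every entry is a transposition, and the
tops are weakly increasing along the list. -/
def WeaklyMonotoneList {n : ℕ} (w : List (Equiv.Perm (Fin n))) : Prop :=
  (∀ τ ∈ w, τ.IsSwap) ∧ w.Pairwise (fun a b => top a ≤ top b)

open Equiv

namespace List

variable {α ι : Type*} {p : ι → α → Prop} [∀ i, DecidablePred (p i)]

theorem mem_of_mem_of_filter_eq {l l' : List α} {a : α} {i : ι} (ha : a ∈ l) (hai : p i a)
    (h : l.filter (p i ·) = l'.filter (p i ·)) : a ∈ l' :=
  mem_of_mem_filter (h ▸ mem_filter.2 ⟨ha, decide_eq_true hai⟩)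

theorem filter_eq_of_cons_filter_eq {l l' : List α} {a : α} {i : ι}
    (h : (a :: l).filter (p i ·) = (a :: l').filter (p i ·)) :
    l.filter (p i ·) = l'.filter (p i ·) := by
  by_cases hai : p i a <;> simpa [filter_cons, hai] using h

variable [Fintype ι]

variable (p) in
theorem sum_length_filter_eq_length {l : List α} (h : ∀ a ∈ l, ∃! i, p i a) :
    ∑ i, (l.filter (p i ·)).length = l.length := by
  induction l with
  | nil => simp
  | cons a l ih =>
    obtain ⟨i, hi, hunique⟩ := h a mem_cons_self
    have hcount : ∑ j, (if p j a then 1 else 0) = 1 := by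
      rw [Fintype.sum_eq_single i fun j hj => if_neg fun hj' => hj (hunique j hj'), if_pos hi]
    simp only [← countP_eq_length_filter, countP_cons, decide_eq_true_eq,
      Finset.sum_add_distrib, hcount] at ih ⊢
    rw [ih fun b hb => h b (mem_cons_of_mem a hb), length_cons]

variable {β : Type*} {k : α → β} {S : Set α}

theorem eq_of_forall_filter_eq [PartialOrder β] (hS : ∀ a ∈ S, ∃! i, p i a)
    (hkS : ∀ a ∈ S, ∀ b ∈ S, k a = k b → ∀ i, p i a → p i b) {l l' : List α}
    (hlS : ∀ a ∈ l, a ∈ S) (hl'S : ∀ a ∈ l', a ∈ S)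
    (hl : l.Pairwise (k · ≤ k ·)) (hl' : l'.Pairwise (k · ≤ k ·))
    (h : ∀ i, l.filter (p i ·) = l'.filter (p i ·)) : l = l' := by
  have hlen : l.length = l'.length := by
    rw [← sum_length_filter_eq_length p fun a ha => hS a (hlS a ha),
      ← sum_length_filter_eq_length p fun a ha => hS a (hl'S a ha)]
    simp only [h]
  induction l generalizing l' with
  | nil => exact (length_eq_zero_iff.1 hlen.symm).symm
  | cons a t ih =>
    obtain _ | ⟨b, t'⟩ := l'
    · simp at hlen
    obtain ⟨i, hai, -⟩ := hS a (hlS a mem_cons_self)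
    obtain ⟨j, hbj, -⟩ := hS b (hl'S b mem_cons_self)
    have hab : k a ≤ k b := by
      rcases mem_cons.1 (mem_of_mem_of_filter_eq mem_cons_self hbj (h j).symm) with hba | hbt
      exacts [hba ▸ le_rfl, rel_of_pairwise_cons hl hbt]
    have hba : k b ≤ k a := by
      rcases mem_cons.1 (mem_of_mem_of_filter_eq mem_cons_self hai (h i)) with hab | hat'
      exacts [hab ▸ le_rfl, rel_of_pairwise_cons hl' hat']
    have hbi : p i b := hkS a (hlS a mem_cons_self) b (hl'S b mem_cons_self)
      (le_antisymm hab hba) i hai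
    obtain ⟨rfl, -⟩ : a = b ∧ _ := by simpa [filter_cons, hai, hbi] using h i
    congr 1
    exact ih (fun x hx => hlS x (mem_cons_of_mem a hx)) (fun x hx => hl'S x (mem_cons_of_mem a hx))
      hl.of_cons hl'.of_cons (fun i => filter_eq_of_cons_filter_eq (h i)) (by simpa using hlen)

theorem exists_pairwise_forall_filter_eq [LinearOrder β] (hS : ∀ a ∈ S, ∃! i, p i a)
    {g : ι → List α} (hg : ∀ i, ∀ a ∈ g i, a ∈ S ∧ p i a)
    (hsorted : ∀ i, (g i).Pairwise (k · ≤ k ·)) :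
    ∃ l : List α, l.Pairwise (k · ≤ k ·) ∧ (∀ a ∈ l, ∃ i, a ∈ g i) ∧
      ∀ i, l.filter (p i ·) = g i := by
  classical
  have htrans : ∀ a b c : α, decide (k a ≤ k b) → decide (k b ≤ k c) → decide (k a ≤ k c) := by
    simpa using fun _ _ _ => le_trans
  have htotal : ∀ a b : α, (decide (k a ≤ k b) || decide (k b ≤ k a)) := by
    simpa using fun a b => le_total (k a) (k b)
  set L := Finset.univ.toList.flatMap g
  set l := L.mergeSort (fun a b => k a ≤ k b)
  have hl : ∀ a, a ∈ l ↔ ∃ i, a ∈ g i := by simp [l, L]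
  have hsub : ∀ i, g i <+ l.filter (p i ·) := fun i => by
    have : g i <+ l := sublist_mergeSort htrans htotal (by simpa using hsorted i)
      (sublist_flatten_of_mem (by simp))
    simpa [filter_eq_self.2 fun a ha => decide_eq_true (hg i a ha).2] using this.filter (p i ·)
  have hlen : ∑ i, (l.filter (p i ·)).length = ∑ i, (g i).length := by
    rw [sum_length_filter_eq_length p fun a ha => ?_, length_mergeSort, length_flatMap,
      Finset.sum_map_toList]
    obtain ⟨i, hi⟩ := (hl a).1 ha
    exact hS a (hg i a hi).1
  refine ⟨l, by simpa using pairwise_mergeSort htrans htotal L, fun a => (hl a).1,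
    fun i => ((hsub i).eq_of_length ?_).symm⟩
  exact (Finset.sum_eq_sum_iff_of_le fun i _ => (hsub i).length_le).1 hlen.symm i
    (Finset.mem_univ i)

end List

namespace Finpartition

variable {α : Type*} [DecidableEq α] {s : Finset α}

theorem existsUnique_subset_part (P : Finpartition s) {t : Finset α} (ht : t.Nonempty)
    (h : ∃ B ∈ P.parts, t ⊆ B) : ∃! B : P.parts, t ⊆ B.1 := by
  obtain ⟨B, hB, htB⟩ := h
  obtain ⟨x, hx⟩ := ht
  exact ⟨⟨B, hB⟩, htB, fun C hC => Subtype.ext (P.eq_of_mem_parts C.2 hB (hC hx) (htB hx))⟩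

end Finpartition

section InternalSwaps

variable {α : Type*} [DecidableEq α] [Fintype α] {s : Finset α}

def internalSwaps (π : Finpartition s) : Set (Perm α) :=
  {τ | τ.IsSwap ∧ ∃ B ∈ π.parts, τ.support ⊆ B}

theorem Equiv.Perm.IsSwap.support_nonempty {τ : Perm α} (h : τ.IsSwap) : τ.support.Nonempty :=
  Finset.card_pos.1 (by rw [Perm.card_support_eq_two.2 h]; norm_num)

end InternalSwaps

section Top

variable {n : ℕ}

theorem exists_mem_support_val_eq_top {τ : Perm (Fin n)} (h : τ.support.Nonempty) :
    ∃ x ∈ τ.support, (x : ℕ) = top τ := by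
  obtain ⟨x, hx, hxv⟩ := Finset.exists_mem_eq_sup τ.support h Fin.val
  exact ⟨x, hx, hxv.symm⟩

theorem support_subset_of_top_eq {s : Finset (Fin n)} {π : Finpartition s}
    (τ : Perm (Fin n)) (hτ : τ ∈ internalSwaps π) (σ : Perm (Fin n)) (hσ : σ ∈ internalSwaps π)
    (htop : top τ = top σ) (B : π.parts) (hτB : τ.support ⊆ B.1) : σ.support ⊆ B.1 := by
  obtain ⟨x, hx, hxtop⟩ := exists_mem_support_val_eq_top hτ.1.support_nonempty
  obtain ⟨y, hy, hytop⟩ := exists_mem_support_val_eq_top hσ.1.support_nonempty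
  obtain ⟨C, hC, hσC⟩ := hσ.2
  obtain rfl : x = y := Fin.ext (hxtop.trans (htop.trans hytop.symm))
  rwa [π.eq_of_mem_parts B.2 hC (hτB hx) (hσC hy)]

end Top

theorem bijOn_blockwise_decomposition_monotone_tuples_general (n r : ℕ)
    (π : Finpartition (Finset.univ : Finset (Fin n))) :
    Set.BijOn
      (fun (w : List (Equiv.Perm (Fin n))) (B : π.parts) =>
        w.filter (fun τ => decide (τ.support ⊆ B.1)))
      {w : List (Equiv.Perm (Fin n)) |
        w.length = r ∧ WeaklyMonotoneList w ∧
        ∀ τ ∈ w, ∃ B ∈ π.parts, τ.support ⊆ B}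
      {g : π.parts → List (Equiv.Perm (Fin n)) |
        (∀ B : π.parts,
          WeaklyMonotoneList (g B) ∧ ∀ τ ∈ g B, τ.support ⊆ B.1) ∧
        ∑ B : π.parts, (g B).length = r} := by
  have hS : ∀ τ ∈ internalSwaps π, ∃! B : π.parts, τ.support ⊆ B.1 :=
    fun _ hτ => π.existsUnique_subset_part hτ.1.support_nonempty hτ.2
  refine ⟨?mapsTo, ?injOn, ?surjOn⟩
  case mapsTo =>
    rintro w ⟨rfl, ⟨hswap, hsorted⟩, hint⟩
    refine ⟨fun B => ⟨⟨fun τ hτ => hswap τ (List.mem_of_mem_filter hτ), hsorted.filter _⟩,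
      fun τ hτ => of_decide_eq_true (List.mem_filter.1 hτ).2⟩, ?_⟩
    exact List.sum_length_filter_eq_length (fun (B : π.parts) τ => τ.support ⊆ B.1)
      fun τ hτ => hS τ ⟨hswap τ hτ, hint τ hτ⟩
  case injOn =>
    rintro w ⟨-, ⟨hswap, hsorted⟩, hint⟩ w' ⟨-, ⟨hswap', hsorted'⟩, hint'⟩ heq
    exact List.eq_of_forall_filter_eq hS support_subset_of_top_eq
      (fun τ hτ => ⟨hswap τ hτ, hint τ hτ⟩) (fun τ hτ => ⟨hswap' τ hτ, hint' τ hτ⟩)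
      hsorted hsorted' (congrFun heq)
  case surjOn =>
    rintro g ⟨hg, rfl⟩
    have hgS : ∀ B, ∀ τ ∈ g B, τ ∈ internalSwaps π ∧ τ.support ⊆ B.1 :=
      fun B τ hτ => ⟨⟨(hg B).1.1 τ hτ, B, B.2, (hg B).2 τ hτ⟩, (hg B).2 τ hτ⟩
    obtain ⟨w, hsorted, hmem, hfilter⟩ :=
      List.exists_pairwise_forall_filter_eq hS hgS fun B => (hg B).1.2
    have hwS : ∀ τ ∈ w, τ ∈ internalSwaps π := fun τ hτ =>
      let ⟨B, hB⟩ := hmem τ hτ; (hgS B τ hB).1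
    refine ⟨w, ⟨?_, ⟨fun τ hτ => (hwS τ hτ).1, hsorted⟩, fun τ hτ => (hwS τ hτ).2⟩,
      funext hfilter⟩
    rw [← List.sum_length_filter_eq_length (fun (B : π.parts) τ => τ.support ⊆ B.1)
      fun τ hτ => hS τ (hwS τ hτ)]
    simp only [hfilter]

/-- Let `π` be a set partition of `[n]` (a `Finpartition` of
`Finset.univ`).  Say a transposition is `π`-internal if its two moved points (i.e.
its support) lie in one block of `π`.  The map sending a weakly monotone `r`-tuple
`w` of `π`-internal transpositions to the family of its subtuples
`w|_B = (entries with support in B)`, indexed by the blocks `B` of `π`, is a bijection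
onto the set of families `(w_B)_{B ∈ π}` of weakly monotone tuples of transpositions
internal to the respective blocks with total length `r` (the disjoint union, over
`(r_B)_B` with `∑_B r_B = r`, of the products `∏_B W^↑_{r_B}(B)`). -/
theorem bijOn_blockwise_decomposition_monotone_tuples (n r : ℕ) (hn : 1 ≤ n)
    (π : Finpartition (Finset.univ : Finset (Fin n))) :
    Set.BijOn
      (fun (w : List (Equiv.Perm (Fin n))) (B : π.parts) =>
        w.filter (fun τ => decide (τ.support ⊆ B.1)))
      {w : List (Equiv.Perm (Fin n)) |
        w.length = r ∧ WeaklyMonotoneList w ∧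
        ∀ τ ∈ w, ∃ B ∈ π.parts, τ.support ⊆ B}
      {g : π.parts → List (Equiv.Perm (Fin n)) |
        (∀ B : π.parts,
          WeaklyMonotoneList (g B) ∧ ∀ τ ∈ g B, τ.support ⊆ B.1) ∧
        ∑ B : π.parts, (g B).length = r} :=
  bijOn_blockwise_decomposition_monotone_tuples_general n r π
end

section
/- Let n ≥ 1, let α ∈ S_n, and let τ_1,…,τ_r be transpositions of [n] such that the subgroup of S_n generated by α, τ_1,…,τ_r acts transitively on [n]. Set β = α τ_1 ⋯ τ_r. Then #α + #β − r = 2 − 2d for some integer d ≥ 0; equivalently, r ≥ #α + #β − 2 and r − #α − #β is even. -/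
/-
Write `c(S)` for the number of orbits of the subgroup generated by a set `S` of permutations,
so that `#σ = c{σ}`. Adding a transposition `(a b)` to `S` leaves `c` unchanged when `a` and `b`
already share an orbit and lowers it by one otherwise; together with the sign, this shows that
`#(σ (a b)) = #σ ± 1`, with `-1` forced when `a` and `b` lie in different cycles of `σ`.
Peeling off one transposition at a time then gives
`#α + #(α τ₁ ⋯ τᵣ) + 2d = r + 2 c{α, τ₁, …, τᵣ}` for some `d ≥ 0`,
and transitivity means that the last orbit count is `1`.
-/

open Equiv Equiv.Perm Subgroup MulAction

namespace Subgroup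

variable {G : Type*} [Group G]

lemma closure_insert_mul_of_mem {S : Set G} {g : G} (hg : g ∈ S) (σ : G) :
    closure (insert (σ * g) S) = closure (insert σ S) := by
  have hS : ∀ x : G, S ⊆ closure (insert x S) :=
    fun x ↦ (Set.subset_insert x S).trans subset_closure
  have hmem : ∀ x : G, x ∈ closure (insert x S) := fun x ↦ subset_closure (Set.mem_insert x S)
  apply le_antisymm <;> rw [closure_le, Set.insert_subset_iff]
  · exact ⟨mul_mem (hmem σ) (hS σ hg), hS σ⟩
  · exact ⟨by simpa using mul_mem (hmem (σ * g)) (inv_mem (hS _ hg)), hS _⟩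

end Subgroup

namespace Setoid

variable {α : Type*} {t s : Setoid α} {a b : α}

/-- The join of `t` with the relation identifying `a` and `b`. -/
def joinPair (t : Setoid α) (a b : α) : Setoid α where
  r x y := t x y ∨ (t x a ∧ t b y) ∨ (t x b ∧ t a y)
  iseqv.refl x := Or.inl (t.refl x)
  iseqv.symm := by
    rintro x y (h | ⟨h₁, h₂⟩ | ⟨h₁, h₂⟩)
    exacts [Or.inl (t.symm h), Or.inr (Or.inr ⟨t.symm h₂, t.symm h₁⟩),
      Or.inr (Or.inl ⟨t.symm h₂, t.symm h₁⟩)]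
  iseqv.trans := by
    rintro x y z (h | ⟨h₁, h₂⟩ | ⟨h₁, h₂⟩) (k | ⟨k₁, k₂⟩ | ⟨k₁, k₂⟩)
    · exact Or.inl (t.trans h k)
    · exact Or.inr (Or.inl ⟨t.trans h k₁, k₂⟩)
    · exact Or.inr (Or.inr ⟨t.trans h k₁, k₂⟩)
    · exact Or.inr (Or.inl ⟨h₁, t.trans h₂ k⟩)
    · exact Or.inl (t.trans (t.trans h₁ (t.symm (t.trans h₂ k₁))) k₂)
    · exact Or.inl (t.trans h₁ k₂)
    · exact Or.inr (Or.inr ⟨h₁, t.trans h₂ k⟩)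
    · exact Or.inl (t.trans h₁ k₂)
    · exact Or.inl (t.trans (t.trans h₁ (t.symm (t.trans h₂ k₁))) k₂)

lemma le_joinPair : t ≤ t.joinPair a b := fun _ _ ↦ Or.inl

lemma joinPair_rel : t.joinPair a b a b := Or.inr (Or.inl ⟨t.refl a, t.refl b⟩)

lemma joinPair_le (hts : t ≤ s) (hab : s a b) : t.joinPair a b ≤ s := by
  rintro x y (h | ⟨h₁, h₂⟩ | ⟨h₁, h₂⟩)
  · exact hts h
  · exact s.trans (hts h₁) (s.trans hab (hts h₂))
  · exact s.trans (hts h₁) (s.trans (s.symm hab) (hts h₂))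

lemma joinPair_eq_self (hab : t a b) : t.joinPair a b = t :=
  le_antisymm (joinPair_le le_rfl hab) le_joinPair

/-- Away from the class of `b`, the classes of `t` and of `t.joinPair a b` correspond. -/
lemma card_quotient_joinPair_add_one [Finite α] (hab : ¬ t a b) :
    Nat.card (Quotient (t.joinPair a b)) + 1 = Nat.card (Quotient t) := by
  classical
  let φ : {q : Quotient t // q ≠ ⟦b⟧} → Quotient (t.joinPair a b) :=
    fun q ↦ Quotient.map' id (fun _ _ ↦ Or.inl) q.1
  have hφ : φ.Bijective := by
    constructor
    · rintro ⟨⟨x⟩, hx⟩ ⟨⟨y⟩, hy⟩ hxy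
      replace hx : ¬ t x b := fun h ↦ hx (Quotient.sound h)
      replace hy : ¬ t y b := fun h ↦ hy (Quotient.sound h)
      rcases Quotient.exact hxy with h | ⟨-, h⟩ | ⟨h, -⟩
      exacts [Subtype.ext (Quotient.sound h), (hy (t.symm h)).elim, (hx h).elim]
    · rintro ⟨u⟩
      by_cases hu : t u b
      · exact ⟨⟨⟦a⟧, fun h ↦ hab (Quotient.exact h)⟩,
          Quotient.sound (Or.inr (Or.inl ⟨t.refl a, t.symm hu⟩))⟩
      · exact ⟨⟨⟦u⟧, fun h ↦ hu (Quotient.exact h)⟩, rfl⟩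
  rw [← Nat.card_congr (Equiv.ofBijective φ hφ), ← Finite.card_option,
    Nat.card_congr (Equiv.optionSubtypeNe _)]

end Setoid

namespace Equiv.Perm

variable {α : Type*}

lemma orbitRel_mono {H K : Subgroup (Perm α)} (hHK : H ≤ K) :
    orbitRel H α ≤ orbitRel K α := by
  rintro x y ⟨⟨g, hg⟩, rfl⟩
  exact ⟨⟨g, hHK hg⟩, rfl⟩

lemma orbitRel_of_mem {H : Subgroup (Perm α)} {g : Perm α} (hg : g ∈ H) (x : α) :
    orbitRel H α (g x) x :=
  ⟨⟨g, hg⟩, rfl⟩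

lemma orbitRel_closure_insert_swap [DecidableEq α] (S : Set (Perm α)) (a b : α) :
    orbitRel (closure (insert (swap a b) S)) α = (orbitRel (closure S) α).joinPair a b := by
  refine le_antisymm ?_ <| Setoid.joinPair_le
    (orbitRel_mono (closure_mono (Set.subset_insert _ _)))
    (by simpa using orbitRel_of_mem (subset_closure (Set.mem_insert (swap a b) S)) b)
  set t := (orbitRel (closure S) α).joinPair a b
  suffices h : ∀ g ∈ closure (insert (swap a b) S), ∀ x, t (g x) x by
    rintro _ x ⟨⟨g, hg⟩, rfl⟩
    exact h g hg x
  intro g hg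
  induction hg using closure_induction with
  | mem g hg =>
    intro x
    rcases Set.mem_insert_iff.1 hg with rfl | hg
    · rcases eq_or_ne x a with rfl | hxa
      · rw [swap_apply_left]
        exact t.symm Setoid.joinPair_rel
      rcases eq_or_ne x b with rfl | hxb
      · rw [swap_apply_right]
        exact Setoid.joinPair_rel
      · rw [swap_apply_of_ne_of_ne hxa hxb]
    · exact Setoid.le_joinPair (orbitRel_of_mem (subset_closure hg) x)
  | one => exact t.refl
  | mul g h _ _ hg hh => exact fun x ↦ t.trans (hg (h x)) (hh x)
  | inv g _ hg => exact fun x ↦ by simpa using t.symm (hg (g⁻¹ x))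

lemma orbitRel_zpowers (σ : Perm α) : orbitRel (zpowers σ) α = SameCycle.setoid σ := by
  ext x y
  change _ ↔ σ.SameCycle x y
  rw [sameCycle_comm]
  constructor
  · rintro ⟨⟨g, hg⟩, rfl⟩
    obtain ⟨k, rfl⟩ := mem_zpowers_iff.1 hg
    exact ⟨k, rfl⟩
  · rintro ⟨k, rfl⟩
    exact ⟨⟨σ ^ k, zpow_mem_zpowers σ k⟩, rfl⟩

variable (α) in
noncomputable def orbitCount (S : Set (Perm α)) : ℕ :=
  Nat.card (orbitRel.Quotient (closure S) α)

lemma orbitCount_insert_swap_of_rel [DecidableEq α] {S : Set (Perm α)} {a b : α}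
    (h : orbitRel (closure S) α a b) : orbitCount α (insert (swap a b) S) = orbitCount α S := by
  rw [orbitCount, orbitCount, orbitRel.Quotient, orbitRel_closure_insert_swap,
    Setoid.joinPair_eq_self h]

lemma orbitCount_insert_swap_add_one [Finite α] [DecidableEq α] {S : Set (Perm α)} {a b : α}
    (h : ¬ orbitRel (closure S) α a b) :
    orbitCount α (insert (swap a b) S) + 1 = orbitCount α S := by
  rw [orbitCount, orbitCount, orbitRel.Quotient, orbitRel_closure_insert_swap]
  exact Setoid.card_quotient_joinPair_add_one h

lemma orbitCount_eq_one [Nonempty α] (S : Set (Perm α)) [IsPretransitive (closure S) α] :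
    orbitCount α S = 1 := by
  obtain ⟨_⟩ := (pretransitive_iff_unique_quotient_of_nonempty (closure S) α).1 ‹_›
  exact Nat.card_unique

lemma orbitRel_closure_singleton (σ : Perm α) :
    orbitRel (closure {σ}) α = SameCycle.setoid σ := by
  rw [← zpowers_eq_closure, orbitRel_zpowers]

lemma orbitCount_pair_swap_mul [DecidableEq α] (σ : Perm α) (a b : α) :
    orbitCount α {swap a b, σ * swap a b} = orbitCount α {swap a b, σ} := by
  rw [orbitCount, orbitCount, Set.pair_comm, closure_insert_mul_of_mem (Set.mem_singleton _),
    Set.pair_comm]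

lemma orbitCount_pair_swap_eq_or [Finite α] [DecidableEq α] (σ : Perm α) (a b : α) :
    orbitCount α {swap a b, σ} = orbitCount α {σ} ∨
      orbitCount α {swap a b, σ} + 1 = orbitCount α {σ} := by
  by_cases h : σ.SameCycle a b
  · exact .inl (orbitCount_insert_swap_of_rel (by rwa [orbitRel_closure_singleton]))
  · exact .inr (orbitCount_insert_swap_add_one (by rwa [orbitRel_closure_singleton]))

section Fintype

variable [Fintype α] [DecidableEq α] (σ : Perm α)

def fixedPointOrCycleOf (x : α) : {x // x ∉ σ.support} ⊕ σ.cycleFactorsFinset :=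
  if hx : x ∈ σ.support then .inr ⟨σ.cycleOf x, cycleOf_mem_cycleFactorsFinset_iff.2 hx⟩
  else .inl ⟨x, hx⟩

lemma sameCycle_iff_fixedPointOrCycleOf_eq {x y : α} :
    σ.SameCycle x y ↔ σ.fixedPointOrCycleOf x = σ.fixedPointOrCycleOf y := by
  by_cases hx : x ∈ σ.support <;> by_cases hy : y ∈ σ.support
  · simp [fixedPointOrCycleOf, hx, hy, sameCycle_iff_cycleOf_eq_of_mem_support hx hy]
  · simpa [fixedPointOrCycleOf, hx, hy] using fun h ↦ hy (h.mem_support_iff.1 hx)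
  · simpa [fixedPointOrCycleOf, hx, hy] using fun h ↦ hx (h.mem_support_iff.2 hy)
  · simpa [fixedPointOrCycleOf, hx, hy] using
      ⟨fun h ↦ h.eq_of_left (notMem_support.1 hx), fun h ↦ h ▸ SameCycle.refl σ x⟩

lemma fixedPointOrCycleOf_surjective : (fixedPointOrCycleOf σ).Surjective := by
  rintro (⟨x, hx⟩ | ⟨c, hc⟩)
  · exact ⟨x, by simp [fixedPointOrCycleOf, hx]⟩
  · obtain ⟨a, ha⟩ := (mem_cycleFactorsFinset_iff.1 hc).1.nonempty_support
    refine ⟨a, ?_⟩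
    have hσa : a ∈ σ.support := mem_cycleFactorsFinset_support_le hc ha
    simp [fixedPointOrCycleOf, hσa, cycle_is_cycleOf ha hc]

lemma card_quotient_sameCycle :
    Nat.card (Quotient (SameCycle.setoid σ)) =
      (Fintype.card α - σ.support.card) + Multiset.card σ.cycleType := by
  have hker : SameCycle.setoid σ = Setoid.ker σ.fixedPointOrCycleOf :=
    Setoid.ext fun _ _ ↦ σ.sameCycle_iff_fixedPointOrCycleOf_eq
  rw [hker,
    Nat.card_congr (Setoid.quotientKerEquivOfSurjective _ σ.fixedPointOrCycleOf_surjective),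
    Nat.card_sum, Nat.card_eq_fintype_card, Fintype.card_subtype_compl, Fintype.card_coe,
    Nat.card_eq_fintype_card, Fintype.card_coe, cycleType_def, Multiset.card_map]
  rfl

lemma orbitCount_singleton :
    orbitCount α {σ} = (Fintype.card α - σ.support.card) + Multiset.card σ.cycleType := by
  rw [orbitCount, orbitRel.Quotient, orbitRel_closure_singleton, card_quotient_sameCycle]

lemma sign_eq_neg_one_pow_orbitCount : sign σ = (-1) ^ (Fintype.card α + orbitCount α {σ}) := by
  have hs : σ.support.card ≤ Fintype.card α := σ.support.card_le_univ
  rw [sign_of_cycleType, sum_cycleType, orbitCount_singleton,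
    show Fintype.card α + (Fintype.card α - σ.support.card + σ.cycleType.card) =
      σ.support.card + σ.cycleType.card + 2 * (Fintype.card α - σ.support.card) by omega]
  simp [pow_add, pow_mul]

variable {σ} {a b : α}

lemma orbitCount_singleton_mul_swap_ne (hab : a ≠ b) :
    orbitCount α {σ * swap a b} ≠ orbitCount α {σ} := by
  intro h
  have hsign := sign_eq_neg_one_pow_orbitCount (σ * swap a b)
  rw [h, ← sign_eq_neg_one_pow_orbitCount, sign_mul, sign_swap hab] at hsign
  exact absurd (mul_left_cancel (hsign.trans (mul_one _).symm)) (by decide)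

/-- The counts `#σ` and `#(σ * swap a b)` both lie in `{c, c + 1}`, where `c` counts the orbits of
`⟨σ, swap a b⟩ = ⟨σ * swap a b, swap a b⟩`, and they differ in parity. -/
lemma orbitCount_mul_swap_of_sameCycle (hab : a ≠ b) (h : σ.SameCycle a b) :
    orbitCount α {σ * swap a b} = orbitCount α {σ} + 1 := by
  have hσ : orbitCount α {swap a b, σ} = orbitCount α {σ} :=
    orbitCount_insert_swap_of_rel (by rwa [orbitRel_closure_singleton])
  have := orbitCount_pair_swap_eq_or (σ * swap a b) a b
  have := orbitCount_pair_swap_mul σ a b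
  have := orbitCount_singleton_mul_swap_ne (σ := σ) hab
  omega

lemma orbitCount_mul_swap_of_not_sameCycle (hab : a ≠ b) (h : ¬ σ.SameCycle a b) :
    orbitCount α {σ * swap a b} + 1 = orbitCount α {σ} := by
  have hσ : orbitCount α {swap a b, σ} + 1 = orbitCount α {σ} :=
    orbitCount_insert_swap_add_one (by rwa [orbitRel_closure_singleton])
  have := orbitCount_pair_swap_eq_or (σ * swap a b) a b
  have := orbitCount_pair_swap_mul σ a b
  have := orbitCount_singleton_mul_swap_ne (σ := σ) hab
  omega

theorem exists_orbitCount_add_orbitCount_mul_prod (σ : Perm α) (l : List (Perm α))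
    (hl : ∀ τ ∈ l, τ.IsSwap) :
    ∃ d : ℕ, orbitCount α {σ} + orbitCount α {σ * l.prod} + 2 * d =
      l.length + 2 * orbitCount α (insert σ {τ | τ ∈ l}) := by
  induction l generalizing σ with
  | nil => exact ⟨0, by simp [two_mul]⟩
  | cons τ l ih =>
    obtain ⟨a, b, hab, rfl⟩ := hl τ List.mem_cons_self
    obtain ⟨ρ, rfl⟩ : ∃ ρ, σ = ρ * swap a b :=
      ⟨σ * swap a b, (mul_swap_mul_self a b σ).symm⟩
    obtain ⟨d, hd⟩ := ih ρ fun τ hτ ↦ hl τ (List.mem_cons_of_mem _ hτ)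
    have hprod : ρ * swap a b * (swap a b :: l).prod = ρ * l.prod := by
      rw [List.prod_cons, mul_assoc, swap_mul_self_mul]
    have hgen : orbitCount α (insert (ρ * swap a b) {τ | τ ∈ swap a b :: l}) =
        orbitCount α (insert (swap a b) (insert ρ {τ | τ ∈ l})) := by
      have : {τ | τ ∈ swap a b :: l} = insert (swap a b) {τ | τ ∈ l} := by ext; simp
      rw [orbitCount, orbitCount, this, closure_insert_mul_of_mem (Set.mem_insert _ _),
        Set.insert_comm]
    rw [hprod, hgen, List.length_cons]
    by_cases hrel : orbitRel (closure (insert ρ {τ | τ ∈ l})) α a b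
    · have := orbitCount_insert_swap_of_rel hrel
      by_cases hρ : ρ.SameCycle a b
      · have := orbitCount_mul_swap_of_sameCycle hab hρ
        exact ⟨d, by omega⟩
      · have := orbitCount_mul_swap_of_not_sameCycle hab hρ
        exact ⟨d + 1, by omega⟩
    · have hρ : ¬ ρ.SameCycle a b := fun h ↦ hrel <| orbitRel_mono
        (closure_mono (Set.singleton_subset_iff.2 (Set.mem_insert _ _)))
        (by rwa [orbitRel_closure_singleton])
      have := orbitCount_insert_swap_add_one hrel
      have := orbitCount_mul_swap_of_not_sameCycle hab hρ
      exact ⟨d, by omega⟩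

end Fintype

end Equiv.Perm

lemma cycleCount_eq_orbitCount {n : ℕ} (σ : Equiv.Perm (Fin n)) :
    cycleCount σ = orbitCount (Fin n) {σ} := by
  rw [orbitCount_singleton, Fintype.card_fin, cycleCount]

/-- (Riemann–Hurwitz parity/bound.)  If `α ∈ S_n` and transpositions
`τ_1, …, τ_r` generate together with `α` a transitive subgroup of `S_n`, and
`β = α τ_1 ⋯ τ_r`, then `#α + #β - r = 2 - 2d` for some integer `d ≥ 0`
(equivalently, `#α + #β + 2d = r + 2`). -/
theorem riemann_hurwitz_defect (n r : ℕ) (hn : 1 ≤ n) (α : Equiv.Perm (Fin n))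
    (f : Fin r → Equiv.Perm (Fin n)) (hf : IsTranspositionTuple f)
    (htrans : ActsTransitively ({α} ∪ Set.range f)) :
    ∃ d : ℕ, cycleCount α + cycleCount (α * tupleProd f) + 2 * d = r + 2 := by
  have : Nonempty (Fin n) := ⟨⟨0, hn⟩⟩
  have : IsPretransitive (closure ({α} ∪ Set.range f)) (Fin n) :=
    ⟨fun x y ↦ (htrans x y).elim fun g ⟨hg, hgx⟩ ↦ ⟨⟨g, hg⟩, hgx⟩⟩
  have hgen : insert α {τ | τ ∈ List.ofFn f} = {α} ∪ Set.range f := by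
    ext; simp [List.mem_ofFn']
  obtain ⟨d, hd⟩ := exists_orbitCount_add_orbitCount_mul_prod α (List.ofFn f)
    (List.forall_mem_ofFn_iff.2 hf)
  rw [hgen, orbitCount_eq_one ({α} ∪ Set.range f), List.length_ofFn] at hd
  exact ⟨d, by rwa [cycleCount_eq_orbitCount, cycleCount_eq_orbitCount, tupleProd]⟩
end
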